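/- For any trie T with n edges, the number of distinct palindromic substrings of T, including the empty string, is at most n + 1, i.e., |DPal(T)| ≤ n + 1. -/

import Mathlib

/-- A trie over alphabet `α`: a finite rooted tree with a parent function,
every node reaches the root by iterating `par`, each non-root node carries the
label of the edge to its parent, and distinct children of a node have
distinct labels. -/
structure Trie (α : Type*) where
  V : Type
  fV : Fintype V
  dV : DecidableEq V
  root : V
  par : V → V
  lab : V → α
  par_root : par root = root
  reaches_root : ∀ v : V, ∃ k : ℕ, par^[k] v = root
  distinct_labels : ∀ u v : V, u ≠ root → v ≠ root →
    par u = par v → lab u = lab v → u = v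

attribute [instance] Trie.fV Trie.dV

namespace Trie

variable {α : Type*}

/-- The depth of a node: its distance to the root. -/
noncomputable def depth (T : Trie α) (v : T.V) : ℕ :=
  Nat.find (T.reaches_root v)

/-- `pref T u k` is the string of the `k` edge labels on the path from `u`
towards the root (read upward). -/
def pref (T : Trie α) : T.V → ℕ → List α
  | _, 0 => []
  | u, k + 1 => T.lab u :: T.pref (T.par u) k

/-- The set of (reversed) substrings of the trie `T`, i.e. all labels of
upward paths, including the empty string. -/
noncomputable def Substr (T : Trie α) : Set (List α) :=
  { w | ∃ (u : T.V) (k : ℕ), k ≤ T.depth u ∧ T.pref u k = w }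

/-- The set of distinct palindromes in the trie `T`. -/
noncomputable def DPal (T : Trie α) : Set (List α) :=
  { w ∈ T.Substr | w = w.reverse }

end Trie

/-! Every palindrome occurring in the trie is the longest palindrome read upward from some
node: if a palindrome `w` read upward from `u` is shorter than the longest one `v` read from
`u`, then `w` is also a suffix of `v`, so it is read from a proper ancestor of `u`. Hence the
map sending each of the `n + 1` nodes to its longest upward palindrome hits all of `DPal T`. -/

theorem List.isSuffix_of_isPrefix_of_palindrome {α : Type*} {w v : List α} (hwv : w <+: v)
    (hw : w = w.reverse) (hv : v = v.reverse) : w <:+ v := by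
  rw [← List.reverse_prefix, ← hw, ← hv]
  exact hwv

namespace Trie

variable {α : Type*} (T : Trie α)

theorem length_pref (u : T.V) (k : ℕ) : (T.pref u k).length = k := by
  induction k generalizing u with
  | zero => rfl
  | succ k ih => simp [pref, ih]

theorem pref_add (u : T.V) (j k : ℕ) :
    T.pref u (j + k) = T.pref u j ++ T.pref (T.par^[j] u) k := by
  induction j generalizing u with
  | zero => simp [pref]
  | succ j ih =>
    rw [Nat.succ_add, pref, pref, ih, Function.iterate_succ_apply, List.cons_append]

theorem iterate_par_depth (u : T.V) : T.par^[T.depth u] u = T.root :=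
  Nat.find_spec (T.reaches_root u)

theorem depth_iterate_par {u : T.V} {j : ℕ} (hj : j ≤ T.depth u) :
    T.depth (T.par^[j] u) = T.depth u - j := by
  have hle : T.depth (T.par^[j] u) ≤ T.depth u - j := Nat.find_min' _ <| by
    rw [← Function.iterate_add_apply, Nat.sub_add_cancel hj, iterate_par_depth]
  have hge : T.depth u ≤ T.depth (T.par^[j] u) + j := Nat.find_min' _ <| by
    rw [Function.iterate_add_apply, iterate_par_depth]
  omega

open Classical in
noncomputable def maxPalLen (u : T.V) : ℕ :=
  Nat.findGreatest (fun k => T.pref u k = (T.pref u k).reverse) (T.depth u)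

noncomputable def longestPal (u : T.V) : List α :=
  T.pref u (T.maxPalLen u)

theorem maxPalLen_le_depth (u : T.V) : T.maxPalLen u ≤ T.depth u := by
  classical exact Nat.findGreatest_le _

theorem longestPal_palindrome (u : T.V) : T.longestPal u = (T.longestPal u).reverse := by
  classical
  exact Nat.findGreatest_spec (P := fun k => T.pref u k = (T.pref u k).reverse) (m := 0)
    (Nat.zero_le _) rfl

theorem le_maxPalLen {u : T.V} {k : ℕ} (hk : k ≤ T.depth u)
    (hpal : T.pref u k = (T.pref u k).reverse) : k ≤ T.maxPalLen u := by
  classical exact Nat.le_findGreatest hk hpal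

theorem pref_iterate_par_eq_of_lt_maxPalLen {u : T.V} {w : List α} (hw : w = w.reverse)
    (hpref : T.pref u w.length = w) (hlt : w.length < T.maxPalLen u) :
    T.pref (T.par^[T.maxPalLen u - w.length] u) w.length = w := by
  set j := T.maxPalLen u - w.length
  have hsplit_pre := T.pref_add u w.length j
  have hsplit_suf := T.pref_add u j w.length
  rw [Nat.add_sub_cancel' hlt.le] at hsplit_pre
  rw [Nat.sub_add_cancel hlt.le] at hsplit_suf
  have hpre : w <+: T.longestPal u := by
    rw [longestPal, hsplit_pre, hpref]
    exact List.prefix_append _ _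
  obtain ⟨t, ht⟩ := List.isSuffix_of_isPrefix_of_palindrome hpre hw (T.longestPal_palindrome u)
  rw [longestPal, hsplit_suf] at ht
  exact (List.append_inj' ht.symm (by rw [length_pref])).2

theorem mem_range_longestPal {u : T.V} {w : List α} (hw : w = w.reverse)
    (hdepth : w.length ≤ T.depth u) (hpref : T.pref u w.length = w) :
    w ∈ Set.range T.longestPal := by
  induction hd : T.depth u using Nat.strong_induction_on generalizing u with
  | _ d ih =>
    subst hd
    have hle : w.length ≤ T.maxPalLen u := T.le_maxPalLen hdepth (by rw [hpref, ← hw])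
    rcases hle.eq_or_lt with heq | hlt
    · exact ⟨u, by rw [longestPal, ← heq, hpref]⟩
    · have hmax := T.maxPalLen_le_depth u
      have hd := T.depth_iterate_par (u := u) (j := T.maxPalLen u - w.length) (by omega)
      exact ih _ (by omega) (by omega) (T.pref_iterate_par_eq_of_lt_maxPalLen hw hpref hlt) hd

theorem dPal_subset_range_longestPal : T.DPal ⊆ Set.range T.longestPal := by
  rintro w ⟨⟨u, k, hk, rfl⟩, hw⟩
  exact T.mem_range_longestPal hw (by rwa [length_pref]) (by rw [length_pref])

end Trie

/-- For any trie with `n` edges, the number of distinct palindromic substrings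
(including the empty string) is at most `n + 1`. -/
theorem dpal_count {α : Type*} (T : Trie α) (n : ℕ)
    (hn : n = Fintype.card T.V - 1) :
    (T.DPal).Finite ∧ (T.DPal).ncard ≤ n + 1 := by
  have hsub := T.dPal_subset_range_longestPal
  have hrange : (Set.range T.longestPal).ncard ≤ Fintype.card T.V := by
    rw [← Nat.card_coe_set_eq, ← Nat.card_eq_fintype_card]
    exact Finite.card_range_le _
  have hnodes : 0 < Fintype.card T.V := Fintype.card_pos_iff.mpr ⟨T.root⟩
  refine ⟨(Set.finite_range _).subset hsub, ?_⟩
  calc (T.DPal).ncard ≤ (Set.range T.longestPal).ncard :=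
        Set.ncard_le_ncard hsub (Set.finite_range _)
    _ ≤ n + 1 := by omega
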